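/- arXiv:2104.12019 — 2 statements merged into one kernel-verified Lean document; each statement's English description precedes it below -/
import Mathlib

section
/- For any n ≥ 1, any 1 ≤ j ≤ n, and any integer 0 ≤ m ≤ n/j, the probability that a uniformly random σ ∈ S_n has exactly m cycles of length j equals ( (1/j)^m / m! ) · Σ_{h=0}^{⌊n/j⌋ − m} (−1/j)^h / h!. -/
open Finset

/-- The number of cycles of length `j` in the permutation `σ` of `{1,…,n}`
(fixed points count as cycles of length 1): the number of points whose
orbit under `σ` has size `j`, divided by `j`. -/
noncomputable def cycleCount {n : ℕ} (σ : Equiv.Perm (Fin n)) (j : ℕ) : ℕ :=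
  (Finset.univ.filter fun x => Function.minimalPeriod (⇑σ) x = j).card / j

/-- The number of cycles of `σ` whose length lies in the set `I`. -/
noncomputable def cycleCountIn {n : ℕ} (σ : Equiv.Perm (Fin n)) (I : Finset ℕ) : ℕ :=
  ∑ j ∈ I, cycleCount σ j

/-- The total number of cycles of `σ` (fixed points included as 1-cycles). -/
noncomputable def totalCycles {n : ℕ} (σ : Equiv.Perm (Fin n)) : ℕ :=
  cycleCountIn σ (Finset.Icc 1 n)

/-- Probability of an event under a uniformly random permutation of `{1,…,n}`. -/
noncomputable def permP (n : ℕ) (E : Equiv.Perm (Fin n) → Prop) : ℝ :=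
  (Nat.card {σ : Equiv.Perm (Fin n) // E σ} : ℝ) / n.factorial

/-- Expectation of `f` under a uniformly random permutation of `{1,…,n}`. -/
noncomputable def permE (n : ℕ) (f : Equiv.Perm (Fin n) → ℝ) : ℝ :=
  (∑ σ : Equiv.Perm (Fin n), f σ) / n.factorial

/-- `H(I) = ∑_{j ∈ I} 1/j`. -/
noncomputable def Hset (I : Finset ℕ) : ℝ := ∑ j ∈ I, (1 : ℝ) / j

/-- The harmonic sum `H_n = ∑_{i=1}^n 1/i`. -/
noncomputable def harm (n : ℕ) : ℝ := Hset (Finset.Icc 1 n)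


/-!
The factorial moments of `C_j` are `E[(C_j)_k] = j^{-k}` as long as `k j ≤ n`. Indeed
`j^k (C_j(σ))_k` counts the embeddings of `k` labelled `j`-cycles with marked starting points
into the cycle structure of `σ`, i.e. the embeddings `f : Fin k × Fin j ↪ Fin n` conjugating the
rotation of the second factor into `σ`; a fixed such `f` is respected by exactly `(n - k j)!`
permutations, so summing over `σ` gives `n! / (n - k j)! · (n - k j)! = n!`.
Since `C_j ≤ ⌊n/j⌋`, the indicator of `C_j = m` equals the finite inclusion–exclusion sum
`∑_h (-1)^h (C_j)_{m+h} / (m! h!)`, and taking expectations gives the formula.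
-/

open Equiv Function Fin.NatCast

section UniformFibers

variable {P Q ι : Type*} {j : ℕ}

theorem Nat.card_mul_eq_of_card_fiber [Finite P] [Finite Q] (π : P → Q)
    (hπ : ∀ q, Nat.card {y // π y = q} = j) : Nat.card Q * j = Nat.card P := by
  have := Fintype.ofFinite Q
  rw [← Nat.card_congr (Equiv.sigmaFiberEquiv π), Nat.card_sigma]
  simp [hπ, Nat.card_eq_fintype_card]

theorem Nat.card_injective_comp_of_card_fiber [Fintype ι] [Finite P] [Finite Q] (π : P → Q)
    (hπ : ∀ q, Nat.card {y // π y = q} = j) :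
    Nat.card {g : ι → P // Injective (π ∘ g)}
      = j ^ Nat.card ι * (Nat.card Q).descFactorial (Nat.card ι) := by
  have := Fintype.ofFinite Q
  let F : {g : ι → P // Injective (π ∘ g)} → (ι ↪ Q) := fun g => ⟨π ∘ g.1, g.2⟩
  have hfiber (h : ι ↪ Q) : {g // F g = h} ≃ ∀ b, {y // π y = h b} :=
    { toFun := fun g b => ⟨g.1.1 b, congrFun (congrArg DFunLike.coe g.2) b⟩
      invFun := fun φ => ⟨⟨fun b => (φ b).1, by
          convert h.injective using 1; funext b; exact (φ b).2⟩,
        DFunLike.ext _ _ fun b => (φ b).2⟩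
      left_inv := fun g => rfl
      right_inv := fun φ => rfl }
  rw [← Nat.card_congr (Equiv.sigmaFiberEquiv F), Nat.card_sigma]
  simp_rw [Nat.card_congr (hfiber _), Nat.card_pi, hπ]
  simp [Nat.card_eq_fintype_card, Fintype.card_embedding_eq, mul_comm]

end UniformFibers

section InclusionExclusion

theorem Int.alternating_sum_range_choose_of_le {d N : ℕ} (h : d ≤ N) :
    ∑ i ∈ Finset.range (N + 1), ((-1) ^ i * d.choose i : ℤ) = if d = 0 then 1 else 0 := by
  obtain _ | d := d
  · simp [sum_range_succ']
  · rw [Int.alternating_sum_range_choose_eq_choose, Nat.choose_eq_zero_of_lt (by omega)]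
    simp

theorem Nat.descFactorial_add_eq_choose_mul (c m h : ℕ) :
    c.descFactorial (m + h) = c.choose m * (c - m).choose h * (m.factorial * h.factorial) := by
  rw [← Nat.descFactorial_mul_descFactorial (Nat.le_add_right m h), Nat.add_sub_cancel_left,
    Nat.descFactorial_eq_factorial_mul_choose, Nat.descFactorial_eq_factorial_mul_choose]
  ring

/-- Inclusion–exclusion: the summand is `(-1)^h C(c, m + h) C(m + h, m)`. -/
theorem sum_range_alternating_descFactorial {c m K : ℕ} (hc : c ≤ K) :
    ∑ h ∈ range (K - m + 1), (-1 : ℝ) ^ h / (m.factorial * h.factorial) * c.descFactorial (m + h)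
      = if c = m then 1 else 0 := by
  have hterm (h : ℕ) : (-1 : ℝ) ^ h / (m.factorial * h.factorial) * c.descFactorial (m + h)
      = c.choose m * ((-1) ^ h * (c - m).choose h) := by
    rw [Nat.descFactorial_add_eq_choose_mul]
    push_cast
    field_simp
  simp_rw [hterm, ← mul_sum]
  rcases lt_or_ge c m with hcm | hmc
  · simp [Nat.choose_eq_zero_of_lt hcm, hcm.ne]
  · have hsum := congrArg (Int.cast : ℤ → ℝ)
      (Int.alternating_sum_range_choose_of_le (d := c - m) (N := K - m) (by omega))
    push_cast at hsum
    rw [hsum]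
    by_cases h : c = m
    · simp [h]
    · simp [h, show c - m ≠ 0 by omega]

end InclusionExclusion

section BlockRotation

theorem val_finRotate {j : ℕ} (i : Fin j) : (finRotate j i : ℕ) = (i + 1) % j := by
  obtain _ | j := j
  · exact i.elim0
  · rw [finRotate_apply, Fin.val_add, Fin.val_one', Nat.add_mod_mod]

theorem finRotate_iterate_apply_zero {j : ℕ} [NeZero j] (i : ℕ) :
    (finRotate j)^[i] 0 = (i : Fin j) := by
  induction i with
  | zero => simp
  | succ i ih => rw [iterate_succ_apply', ih, finRotate_apply, Nat.cast_succ]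

def blockRotation (ι : Type*) (j : ℕ) : Perm (ι × Fin j) := (Equiv.refl ι).prodCongr (finRotate j)

theorem blockRotation_iterate_apply_zero {ι : Type*} {j : ℕ} [NeZero j] (b : ι) (i : ℕ) :
    (blockRotation ι j)^[i] (b, 0) = (b, (i : Fin j)) := by
  simp [blockRotation, Prod.map_iterate, finRotate_iterate_apply_zero]

end BlockRotation

namespace Equiv.Perm

variable {α : Type*} {σ : Perm α} {j : ℕ} {x y : α}

theorem sameCycle_of_pow_apply_eq {a b : ℕ} (h : (σ ^ a) x = (σ ^ b) y) : σ.SameCycle x y := by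
  have : σ.SameCycle ((σ ^ a) x) ((σ ^ b) y) := h ▸ SameCycle.refl σ _
  exact sameCycle_pow_left.1 (sameCycle_pow_right.1 this)

theorem SameCycle.exists_pow_lt_minimalPeriod [Finite α] (h : σ.SameCycle x y)
    (hx : 0 < minimalPeriod σ x) : ∃ i < minimalPeriod σ x, (σ ^ i) x = y := by
  obtain ⟨i, rfl⟩ := h.exists_nat_pow_eq
  exact ⟨i % minimalPeriod σ x, Nat.mod_lt _ hx, by
    simp only [← iterate_eq_pow, iterate_mod_minimalPeriod_eq]⟩

abbrev PtsOnCycleOfLength (σ : Perm α) (j : ℕ) : Type _ := {x : α // minimalPeriod σ x = j}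

def cycleOfLengthSetoid (σ : Perm α) (j : ℕ) : Setoid (σ.PtsOnCycleOfLength j) :=
  (SameCycle.setoid σ).comap Subtype.val

abbrev CyclesOfLength (σ : Perm α) (j : ℕ) : Type _ := Quotient (σ.cycleOfLengthSetoid j)

abbrev cycleClass (σ : Perm α) (j : ℕ) : σ.PtsOnCycleOfLength j → σ.CyclesOfLength j :=
  Quotient.mk _

theorem card_sameCycle_ptsOnCycleOfLength [Finite α] (hj : 0 < j) (x : σ.PtsOnCycleOfLength j) :
    Nat.card {y : σ.PtsOnCycleOfLength j // σ.SameCycle x y} = j := by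
  obtain ⟨x, rfl⟩ := x
  have hper (i : ℕ) : minimalPeriod σ ((σ ^ i) x) = minimalPeriod σ x := by
    rw [← iterate_eq_pow, minimalPeriod_apply_iterate (minimalPeriod_pos_iff_mem_periodicPts.1 hj)]
  refine (Nat.card_eq_of_bijective (fun i : Fin (minimalPeriod σ x) =>
    (⟨⟨(σ ^ (i : ℕ)) x, hper i⟩, (SameCycle.refl σ x).pow_right⟩ :
      {y : σ.PtsOnCycleOfLength _ // σ.SameCycle x y})) ⟨?_, ?_⟩).symm.trans (Nat.card_fin _)
  · intro a b hab
    have hval := congrArg (fun y => y.1.1) hab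
    simp only [← iterate_eq_pow] at hval
    exact Fin.ext ((iterate_eq_iterate_iff_of_lt_minimalPeriod a.2 b.2).1 hval)
  · rintro ⟨⟨y, -⟩, hy⟩
    obtain ⟨i, hi, rfl⟩ := hy.exists_pow_lt_minimalPeriod hj
    exact ⟨⟨i, hi⟩, rfl⟩

theorem card_cycleClass_fiber [Finite α] (hj : 0 < j) (q : σ.CyclesOfLength j) :
    Nat.card {y // σ.cycleClass j y = q} = j := by
  induction q using Quotient.inductionOn with
  | h x =>
    refine (Nat.card_congr (Equiv.subtypeEquivRight fun y => ?_)).trans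
      (card_sameCycle_ptsOnCycleOfLength hj x)
    exact Quotient.eq.trans ⟨SameCycle.symm, SameCycle.symm⟩

end Equiv.Perm

namespace Function.Semiconj

variable {α ι : Type*} {σ : Perm α} {j : ℕ} [NeZero j] {f : ι × Fin j ↪ α}

theorem iterate_apply_zero (hf : Semiconj f (blockRotation ι j) σ) (b : ι) (i : ℕ) :
    σ^[i] (f (b, 0)) = f (b, i) := by
  rw [← (hf.iterate_right i) (b, 0), blockRotation_iterate_apply_zero]

theorem apply_eq_pow_apply_zero (hf : Semiconj f (blockRotation ι j) σ) (z : ι × Fin j) :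
    f z = (σ ^ (z.2 : ℕ)) (f (z.1, 0)) := by
  rw [← Perm.iterate_eq_pow, hf.iterate_apply_zero, Fin.cast_val_eq_self]

theorem minimalPeriod_apply_zero (hf : Semiconj f (blockRotation ι j) σ) (b : ι) :
    minimalPeriod σ (f (b, 0)) = j := by
  have hper (i : ℕ) : IsPeriodicPt σ i (f (b, 0)) ↔ j ∣ i := by
    rw [IsPeriodicPt, IsFixedPt, hf.iterate_apply_zero, f.injective.eq_iff, Prod.mk_inj,
      Fin.natCast_eq_zero]
    simp
  exact Nat.dvd_antisymm ((hper j).2 dvd_rfl).minimalPeriod_dvd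
    ((hper _).1 (isPeriodicPt_minimalPeriod σ _))

theorem eq_of_sameCycle [Finite α] (hf : Semiconj f (blockRotation ι j) σ) {b b' : ι}
    (h : σ.SameCycle (f (b, 0)) (f (b', 0))) : b = b' := by
  have hj : 0 < minimalPeriod σ (f (b, 0)) := by
    rw [hf.minimalPeriod_apply_zero]
    exact Nat.pos_of_neZero j
  obtain ⟨i, hi, hpow⟩ := h.exists_pow_lt_minimalPeriod hj
  rw [hf.minimalPeriod_apply_zero] at hi
  have := hf.apply_eq_pow_apply_zero (b, ⟨i, hi⟩)
  exact congrArg Prod.fst (f.injective (this.trans hpow))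

end Function.Semiconj

namespace Equiv.Perm

section CycleEmbedding

variable {α ι : Type*} {σ : Perm α} {j : ℕ}

def cycleEmbedding (g : ι → σ.PtsOnCycleOfLength j) (hg : Injective (σ.cycleClass j ∘ g)) :
    ι × Fin j ↪ α where
  toFun z := (σ ^ (z.2 : ℕ)) (g z.1)
  inj' := by
    rintro ⟨b, i⟩ ⟨b', i'⟩ h
    obtain rfl : b = b' := hg (Quotient.sound (sameCycle_of_pow_apply_eq h))
    have hi : (i : ℕ) < minimalPeriod σ (g b) := by rw [(g b).2]; exact i.2
    have hi' : (i' : ℕ) < minimalPeriod σ (g b) := by rw [(g b).2]; exact i'.2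
    simp only [← iterate_eq_pow] at h
    simpa [Fin.ext_iff] using (iterate_eq_iterate_iff_of_lt_minimalPeriod hi hi').1 h

theorem semiconj_cycleEmbedding (g : ι → σ.PtsOnCycleOfLength j)
    (hg : Injective (σ.cycleClass j ∘ g)) :
    Semiconj (cycleEmbedding g hg) (blockRotation ι j) σ := by
  rintro ⟨b, i⟩
  have hmod := iterate_mod_minimalPeriod_eq (f := σ) (x := (g b).1) (n := i + 1)
  rw [(g b).2] at hmod
  change (σ ^ (finRotate j i : ℕ)) (g b) = σ ((σ ^ (i : ℕ)) (g b))
  rw [val_finRotate, ← iterate_eq_pow, hmod, iterate_succ_apply', iterate_eq_pow]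

theorem card_semiconj_blockRotation_eq_card_injective [Finite α] [NeZero j] :
    Nat.card {f : ι × Fin j ↪ α // Semiconj f (blockRotation ι j) σ}
      = Nat.card {g : ι → σ.PtsOnCycleOfLength j // Injective (σ.cycleClass j ∘ g)} := by
  refine Nat.card_eq_of_bijective
    (fun f => ⟨fun b => ⟨f.1 (b, 0), f.2.minimalPeriod_apply_zero b⟩,
      fun b b' h => f.2.eq_of_sameCycle (Quotient.exact h)⟩) ⟨?_, fun g => ?_⟩
  · rintro ⟨f, hf⟩ ⟨f', hf'⟩ h
    have h0 (b : ι) : f (b, 0) = f' (b, 0) :=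
      congrArg Subtype.val (congrFun (congrArg Subtype.val h) b)
    ext z : 2
    rw [hf.apply_eq_pow_apply_zero, hf'.apply_eq_pow_apply_zero, h0]
  · refine ⟨⟨cycleEmbedding g.1 g.2, semiconj_cycleEmbedding g.1 g.2⟩, ?_⟩
    ext b
    exact congrArg (· (g.1 b).1) (pow_zero σ)

theorem card_semiconj_blockRotation [Finite α] [Fintype ι] [NeZero j] :
    Nat.card {f : ι × Fin j ↪ α // Semiconj f (blockRotation ι j) σ}
      = j ^ Nat.card ι * (Nat.card (σ.CyclesOfLength j)).descFactorial (Nat.card ι) :=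
  card_semiconj_blockRotation_eq_card_injective.trans
    (Nat.card_injective_comp_of_card_fiber _ (card_cycleClass_fiber (Nat.pos_of_neZero j)))

end CycleEmbedding

section DoubleCounting

variable {α β : Type*} [Fintype α] [Fintype β]

theorem card_semiconj_embedding (f : β ↪ α) (π : Perm β) :
    Nat.card {σ : Perm α // Semiconj f π σ} = (Fintype.card α - Fintype.card β).factorial := by
  classical
  let e : β ≃ Set.range f := Equiv.ofInjective f f.injective
  let σ₀ : Perm α := subtypeCongr (e.permCongr π) 1
  have hσ₀ (b : β) : σ₀ (f b) = f (π b) := by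
    simp [σ₀, subtypeCongr.left_apply _ _ (Set.mem_range_self b), e, Equiv.permCongr_apply]
  -- the permutations respecting `f` form the coset of the pointwise stabiliser of `Set.range f`
  -- through `σ₀`
  have hfix (σ : Perm α) : Semiconj f π σ ↔ ∀ a, ¬ a ∉ Set.range f → (σ₀⁻¹ * σ) a = a := by
    simp only [not_not, Set.forall_mem_range, Perm.mul_apply, Perm.inv_eq_iff_eq, hσ₀]
    exact ⟨fun h b => (h b).symm, fun h b => (h b).symm⟩
  rw [Nat.card_congr (((Equiv.mulLeft σ₀⁻¹).subtypeEquiv hfix).trans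
    (Perm.subtypeEquivSubtypePerm _).symm), Nat.card_perm, Nat.card_eq_fintype_card,
    Fintype.card_subtype_compl, Fintype.card_range]

theorem sum_card_semiconj_embedding [DecidableEq α] (π : Perm β)
    (h : Fintype.card β ≤ Fintype.card α) :
    ∑ σ : Perm α, Nat.card {f : β ↪ α // Semiconj f π σ} = (Fintype.card α).factorial := by
  classical
  calc ∑ σ : Perm α, Nat.card {f : β ↪ α // Semiconj f π σ}
      = ∑ f : β ↪ α, Nat.card {σ : Perm α // Semiconj f π σ} := by
        simp only [Nat.card_eq_fintype_card, Fintype.card_subtype]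
        exact Finset.sum_card_bipartiteAbove_eq_sum_card_bipartiteBelow _
    _ = Fintype.card (β ↪ α) * (Fintype.card α - Fintype.card β).factorial := by
        simp only [card_semiconj_embedding, Finset.sum_const, Finset.card_univ, smul_eq_mul]
    _ = (Fintype.card α).factorial := by
        rw [Fintype.card_embedding_eq, mul_comm, Nat.factorial_mul_descFactorial h]

end DoubleCounting

end Equiv.Perm

section CycleCount

variable {n j k : ℕ}

theorem cycleCount_eq_card_cyclesOfLength (hj : 0 < j) (σ : Perm (Fin n)) :
    cycleCount σ j = Nat.card (σ.CyclesOfLength j) := by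
  rw [cycleCount, ← Fintype.card_subtype, ← Nat.card_eq_fintype_card,
    ← Nat.card_mul_eq_of_card_fiber _ (Perm.card_cycleClass_fiber hj), Nat.mul_div_cancel _ hj]

theorem cycleCount_le_div (σ : Perm (Fin n)) (j : ℕ) : cycleCount σ j ≤ n / j :=
  Nat.div_le_div_right ((card_filter_le _ _).trans_eq (card_fin n))

theorem sum_pow_mul_descFactorial_cycleCount (hj : 0 < j) (hk : k * j ≤ n) :
    ∑ σ : Perm (Fin n), j ^ k * (cycleCount σ j).descFactorial k = n.factorial := by
  have : NeZero j := ⟨hj.ne'⟩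
  have hcard (σ : Perm (Fin n)) : j ^ k * (cycleCount σ j).descFactorial k
      = Nat.card {f : Fin k × Fin j ↪ Fin n // Semiconj f (blockRotation (Fin k) j) σ} := by
    rw [Perm.card_semiconj_blockRotation, Nat.card_fin, cycleCount_eq_card_cyclesOfLength hj]
  simp_rw [hcard]
  simpa using Perm.sum_card_semiconj_embedding (α := Fin n) (blockRotation (Fin k) j)
    (by simpa using hk)

theorem permE_descFactorial_cycleCount (hj : 0 < j) (hk : k * j ≤ n) :
    permE n (fun σ => (cycleCount σ j).descFactorial k) = (1 / j) ^ k := by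
  have h := congrArg (Nat.cast : ℕ → ℝ) (sum_pow_mul_descFactorial_cycleCount hj hk)
  push_cast [← mul_sum] at h
  have hsum : ∑ σ : Perm (Fin n), ((cycleCount σ j).descFactorial k : ℝ) ≠ 0 :=
    right_ne_zero_of_mul (h.trans_ne (Nat.cast_ne_zero.2 n.factorial_ne_zero))
  rw [permE, ← h, div_mul_cancel_right₀ hsum, one_div, inv_pow]

theorem permP_eq_permE_indicator (E : Perm (Fin n) → Prop) [DecidablePred E] :
    permP n E = permE n (fun σ => if E σ then 1 else 0) := by
  simp [permP, permE, Nat.card_eq_fintype_card, Fintype.card_subtype, sum_boole]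

theorem permE_sum_mul {ι : Type*} (s : Finset ι) (c : ι → ℝ) (f : ι → Perm (Fin n) → ℝ) :
    permE n (fun σ => ∑ i ∈ s, c i * f i σ) = ∑ i ∈ s, c i * permE n (f i) := by
  simp only [permE, mul_sum, sum_div, mul_div_assoc]
  exact sum_comm

end CycleCount

theorem goncharov_local_general (n j m : ℕ) (hj1 : 1 ≤ j)
    (hm : m ≤ n / j) :
    permP n (fun σ => cycleCount σ j = m)
      = (1 / (j : ℝ)) ^ m / m.factorial *
          ∑ h ∈ Finset.range (n / j - m + 1), (-1 / (j : ℝ)) ^ h / h.factorial := by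
  have hmoment (h : ℕ) (hh : h ∈ range (n / j - m + 1)) :
      permE n (fun σ => (cycleCount σ j).descFactorial (m + h)) = (1 / j) ^ (m + h) :=
    permE_descFactorial_cycleCount hj1 ((Nat.le_div_iff_mul_le hj1).1 (by simp at hh; omega))
  calc permP n (fun σ => cycleCount σ j = m)
      = permE n (fun σ => ∑ h ∈ range (n / j - m + 1),
          (-1 : ℝ) ^ h / (m.factorial * h.factorial) * (cycleCount σ j).descFactorial (m + h)) := by
        simp_rw [permP_eq_permE_indicator,
          sum_range_alternating_descFactorial (cycleCount_le_div _ j)]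
    _ = ∑ h ∈ range (n / j - m + 1),
          (-1 : ℝ) ^ h / (m.factorial * h.factorial) * (1 / j) ^ (m + h) := by
        rw [permE_sum_mul]
        exact sum_congr rfl fun h hh => by rw [hmoment h hh]
    _ = _ := by
        rw [mul_sum]
        exact sum_congr rfl fun h _ => by ring

/-- **Goncharov's local limit theorem.** For `1 ≤ j ≤ n` and `0 ≤ m ≤ n/j`,
`P(C_j(σ) = m) = ((1/j)^m / m!) Σ_{h=0}^{⌊n/j⌋-m} (-1/j)^h / h!`. -/
theorem goncharov_local (n j m : ℕ) (hn : 1 ≤ n) (hj1 : 1 ≤ j) (hjn : j ≤ n)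
    (hm : m ≤ n / j) :
    permP n (fun σ => cycleCount σ j = m)
      = (1 / (j : ℝ)) ^ m / m.factorial *
          ∑ h ∈ Finset.range (n / j - m + 1), (-1 / (j : ℝ)) ^ h / h.factorial :=
  goncharov_local_general n j m hj1 hm
end

section
/- Let I be a nonempty subset of {1,…,n}. For every real λ ≥ 1, P( C_I(σ) ≥ λ·H(I) + 1 ) ≤ 2·e^{1 − Q(λ)·H(I)}, where Q(λ) = λ log λ − λ + 1. -/
open Finset

/-!
The `k`-th factorial moment of `C_I` is at most `H(I)^k`. Indeed, mark a point on each of `k`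
distinct cycles of lengths `j₁, …, jₖ`; cutting these cycles out encodes the permutation
injectively by an injection of the `∑ jᵢ` points of the marked cycles into `[n]` together with a
permutation of the remaining points, and there are at most `n!` such codes. As a cycle of length
`j` carries `j` possible marks, the expected number of `k`-tuples of distinct cycles with lengths
`j₁, …, jₖ` is at most `∏ 1/jᵢ`; summing over `j ∈ Iᵏ` gives `H(I)^k`.
Expanding `λ^C = ∑_t (λ-1)^t (C choose t)` turns this into `E[λ^{C_I}] ≤ e^{(λ-1)H(I)}`, and
Markov's inequality for `λ^{C_I}` bounds the probability by
`e^{(λ-1)H(I) - (λH(I)+1) log λ} ≤ e^{-Q(λ)H(I)}`.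
-/

open Function

theorem Nat.descFactorial_mul_factorial_sub_le (n m : ℕ) :
    n.descFactorial m * (n - m).factorial ≤ n.factorial := by
  rcases le_or_gt m n with h | h
  · rw [mul_comm, Nat.factorial_mul_descFactorial h]
  · simp [Nat.descFactorial_eq_zero_iff_lt.2 h]

theorem card_filter_injective_forall_mem {β : Type*} [Fintype β] [DecidableEq β]
    (S : Finset β) (k : ℕ) :
    #{f : Fin k → β | Injective f ∧ ∀ i, f i ∈ S} = (#S).descFactorial k := by
  rw [← Fintype.card_coe S, ← Fintype.card_fin k, ← Fintype.card_embedding_eq, Fintype.card_fin,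
    ← Fintype.card_subtype]
  exact Fintype.card_congr
    { toFun f := ⟨fun i => ⟨f.1 i, f.2.2 i⟩, fun a b h => f.2.1 (congrArg Subtype.val h)⟩
      invFun e := ⟨fun i => e i, fun a b h => e.injective (Subtype.ext h), fun i => (e i).2⟩
      left_inv _ := rfl
      right_inv _ := rfl }

theorem one_add_pow_eq_sum_descFactorial (x : ℝ) {m M : ℕ} (hm : m ≤ M) :
    (1 + x) ^ m = ∑ t ∈ range (M + 1), x ^ t * m.descFactorial t / t.factorial := by
  rw [add_comm, add_pow]
  refine (sum_subset (range_subset_range.2 (by omega)) fun t _ ht => ?_).trans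
    (sum_congr rfl fun t _ => ?_)
  · rw [mem_range, not_lt] at ht
    rw [Nat.choose_eq_zero_of_lt (by omega), Nat.cast_zero, mul_zero]
  · rw [one_pow, mul_one, Nat.descFactorial_eq_factorial_mul_choose, Nat.cast_mul]
    field_simp

theorem sum_pow_le_mul_exp_of_sum_descFactorial_le {ι : Type*} (s : Finset ι) (f : ι → ℕ)
    {c h x : ℝ} (hh : 0 ≤ h) (hx : 0 ≤ x)
    (hf : ∀ t, ∑ b ∈ s, ((f b).descFactorial t : ℝ) ≤ c * h ^ t) :
    ∑ b ∈ s, (1 + x) ^ f b ≤ c * Real.exp (x * h) := by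
  have hc : 0 ≤ c := by simpa using (hf 0).trans' (by positivity)
  set M := s.sup f
  calc ∑ b ∈ s, (1 + x) ^ f b
      = ∑ t ∈ range (M + 1), x ^ t / t.factorial * ∑ b ∈ s, ((f b).descFactorial t : ℝ) := by
        rw [sum_congr rfl fun b hb => one_add_pow_eq_sum_descFactorial x (le_sup hb), sum_comm]
        refine sum_congr rfl fun t _ => ?_
        rw [mul_sum]
        exact sum_congr rfl fun b _ => by ring
    _ ≤ ∑ t ∈ range (M + 1), x ^ t / t.factorial * (c * h ^ t) :=
        sum_le_sum fun t _ => mul_le_mul_of_nonneg_left (hf t) (by positivity)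
    _ = c * ∑ t ∈ range (M + 1), (x * h) ^ t / t.factorial := by
        rw [mul_sum]
        exact sum_congr rfl fun t _ => by ring
    _ ≤ c * Real.exp (x * h) :=
        mul_le_mul_of_nonneg_left (Real.sum_le_exp_of_nonneg (by positivity) _) hc

theorem card_filter_mul_rpow_le_sum_pow {ι : Type*} (s : Finset ι) (f : ι → ℕ) {a lam : ℝ}
    (hlam : 1 ≤ lam) : #{b ∈ s | a ≤ f b} * lam ^ a ≤ ∑ b ∈ s, lam ^ f b := by
  calc #{b ∈ s | a ≤ f b} * lam ^ a = ∑ b ∈ s with a ≤ f b, lam ^ a := by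
        rw [sum_const, nsmul_eq_mul]
    _ ≤ ∑ b ∈ s with a ≤ f b, lam ^ f b := sum_le_sum fun b hb => by
        rw [← Real.rpow_natCast]
        exact Real.rpow_le_rpow_of_exponent_le hlam (mem_filter.1 hb).2
    _ ≤ ∑ b ∈ s, lam ^ f b :=
        sum_le_sum_of_subset_of_nonneg (filter_subset _ _) fun _ _ _ => by positivity

namespace Equiv.Perm

theorem pow_finRotate_apply {α : Type*} {σ : Perm α} {x : α} {m : ℕ}
    (hx : minimalPeriod σ x = m) (t : Fin m) :
    (σ ^ (finRotate m t : ℕ)) x = σ ((σ ^ (t : ℕ)) x) := by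
  rw [← mul_apply, ← pow_succ']
  obtain _ | m := m
  · exact t.elim0
  rw [coe_finRotate]
  split_ifs with ht
  · rw [ht, Fin.val_last, pow_zero, ← hx, ← iterate_eq_pow, iterate_minimalPeriod]
    rfl
  · rfl

section Finite

variable {α : Type*} [Finite α] {σ : Perm α}

variable (σ) in
theorem minimalPeriod_pos (x : α) : 0 < minimalPeriod σ x :=
  minimalPeriod_pos_of_mem_periodicPts (σ.injective.mem_periodicPts x)

theorem sameCycle_iff_exists_pow_lt_minimalPeriod {x y : α} :
    σ.SameCycle x y ↔ ∃ t < minimalPeriod σ x, (σ ^ t) x = y := by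
  refine ⟨fun h => ?_, fun ⟨t, _, ht⟩ => ht ▸ (SameCycle.refl σ x).pow_right⟩
  obtain ⟨t, -, rfl⟩ := h.exists_pow_eq'
  refine ⟨t % minimalPeriod σ x, Nat.mod_lt _ (σ.minimalPeriod_pos x), ?_⟩
  rw [← iterate_eq_pow, iterate_mod_minimalPeriod_eq, iterate_eq_pow]

end Finite

variable {k : ℕ}

section Cycles

variable {α : Type*} [Fintype α] [DecidableEq α] (σ : Perm α)

def cycleSet (x : α) : Finset α := {y | σ.SameCycle x y}

def cycleSets : Finset (Finset α) := univ.image σ.cycleSet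

variable {σ}

@[simp] theorem mem_cycleSet {x y : α} : y ∈ σ.cycleSet x ↔ σ.SameCycle x y := by
  simp [cycleSet]

variable (σ) in
theorem card_cycleSet (x : α) : #(σ.cycleSet x) = minimalPeriod σ x := by
  have : σ.cycleSet x = (range (minimalPeriod σ x)).image fun t => (σ ^ t) x := by
    ext y
    simp [sameCycle_iff_exists_pow_lt_minimalPeriod]
  rw [this, card_image_of_injOn, card_range]
  intro s hs t ht hst
  refine iterate_injOn_Iio_minimalPeriod (by simpa using hs) (by simpa using ht) ?_
  simpa only [iterate_eq_pow] using hst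

theorem cycleSet_eq_cycleSet_iff {x y : α} :
    σ.cycleSet x = σ.cycleSet y ↔ σ.SameCycle x y := by
  refine ⟨fun h => ?_, fun h => ?_⟩
  · simpa [← h] using mem_cycleSet.1 (h ▸ mem_cycleSet.2 (SameCycle.refl σ y))
  · ext z
    simp only [mem_cycleSet]
    exact ⟨h.symm.trans, h.trans⟩

theorem mem_cycleSet_iff_cycleSet_eq {x y : α} :
    y ∈ σ.cycleSet x ↔ σ.cycleSet y = σ.cycleSet x := by
  rw [mem_cycleSet, cycleSet_eq_cycleSet_iff, sameCycle_comm]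

variable (σ) in
theorem mem_cycleSet_self (x : α) : x ∈ σ.cycleSet x :=
  mem_cycleSet.2 (SameCycle.refl σ x)

variable (σ) in
theorem cycleSet_mem_cycleSets (x : α) : σ.cycleSet x ∈ σ.cycleSets :=
  mem_image_of_mem _ (mem_univ x)

theorem cycleSet_eq_of_mem {s : Finset α} (hs : s ∈ σ.cycleSets) {x : α} (hx : x ∈ s) :
    σ.cycleSet x = s := by
  obtain ⟨y, -, rfl⟩ := mem_image.1 hs
  exact mem_cycleSet_iff_cycleSet_eq.1 hx

theorem card_pos_of_mem_cycleSets {s : Finset α} (hs : s ∈ σ.cycleSets) : 0 < #s := by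
  obtain ⟨x, -, rfl⟩ := mem_image.1 hs
  exact card_pos.2 ⟨x, σ.mem_cycleSet_self x⟩

variable (σ) in
theorem card_filter_minimalPeriod_eq (j : ℕ) :
    #{x | minimalPeriod σ x = j} = j * #{s ∈ σ.cycleSets | #s = j} := by
  rw [card_eq_sum_card_fiberwise (f := σ.cycleSet) (t := {s ∈ σ.cycleSets | #s = j})
    fun x hx => by simpa [σ.cycleSet_mem_cycleSets, card_cycleSet] using hx,
    sum_const_nat fun s hs => ?_, mul_comm]
  obtain ⟨hs, hj⟩ := mem_filter.1 hs
  obtain ⟨x, -, rfl⟩ := mem_image.1 hs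
  rw [← hj]
  congr 1
  ext y
  simp only [mem_filter, mem_univ, true_and, ← card_cycleSet, mem_cycleSet_iff_cycleSet_eq]
  exact ⟨And.right, fun hy => ⟨by rw [hy, hj], hy⟩⟩

variable (σ) in
def cycleTuples (j : Fin k → ℕ) : Finset (Fin k → Finset α) :=
  {O | Injective O ∧ ∀ i, O i ∈ σ.cycleSets ∧ #(O i) = j i}

variable (σ) in
noncomputable def pointTuples (j : Fin k → ℕ) : Finset (Fin k → α) :=
  {x | (∀ i, minimalPeriod σ (x i) = j i) ∧ ∀ i i', i ≠ i' → ¬σ.SameCycle (x i) (x i')}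

theorem cycleTuples_eq_empty {j : Fin k → ℕ} {i : Fin k} (hj : j i = 0) :
    σ.cycleTuples j = ∅ := by
  refine filter_eq_empty_iff.2 fun O _ hO => ?_
  have := card_pos_of_mem_cycleSets (hO.2 i).1
  rw [(hO.2 i).2, hj] at this
  exact this.false

theorem filter_pointTuples_cycleSet_eq {j : Fin k → ℕ} {O : Fin k → Finset α}
    (hO : O ∈ σ.cycleTuples j) :
    {x ∈ σ.pointTuples j | (fun i => σ.cycleSet (x i)) = O} = Fintype.piFinset O := by
  simp only [cycleTuples, mem_filter, mem_univ, true_and] at hO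
  obtain ⟨hinj, hO⟩ := hO
  ext x
  simp only [pointTuples, mem_filter, mem_univ, true_and, Fintype.mem_piFinset, funext_iff]
  refine ⟨fun ⟨_, hx⟩ i => hx i ▸ σ.mem_cycleSet_self (x i), fun hx => ?_⟩
  have hcycle (i : Fin k) : σ.cycleSet (x i) = O i := cycleSet_eq_of_mem (hO i).1 (hx i)
  refine ⟨⟨fun i => ?_, fun a b hne hab => hne (hinj ?_)⟩, hcycle⟩
  · rw [← card_cycleSet, hcycle, (hO i).2]
  · rwa [← hcycle, ← hcycle, cycleSet_eq_cycleSet_iff]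

variable (σ) in
theorem card_pointTuples (j : Fin k → ℕ) :
    #(σ.pointTuples j) = (∏ i, j i) * #(σ.cycleTuples j) := by
  rw [card_eq_sum_card_fiberwise (f := fun x i => σ.cycleSet (x i)) (t := σ.cycleTuples j)
    fun x hx => ?maps, sum_const_nat fun O hO => ?fiber, mul_comm]
  case maps =>
    simp only [coe_filter, pointTuples, cycleTuples, mem_univ, true_and,
      Set.mem_ofPred_eq] at hx ⊢
    exact ⟨fun a b hab => by_contra fun hne => hx.2 a b hne (cycleSet_eq_cycleSet_iff.1 hab),
      fun i => ⟨σ.cycleSet_mem_cycleSets _, by rw [card_cycleSet, hx.1]⟩⟩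
  case fiber =>
    rw [filter_pointTuples_cycleSet_eq hO, Fintype.card_piFinset]
    exact prod_congr rfl fun i _ => ((mem_filter.1 hO).2.2 i).2

end Cycles

section Marking

variable {α : Type*} [DecidableEq α] (j : Fin k → ℕ)

abbrev MarkedIndex := (i : Fin k) × Fin (j i)

def rotation : Perm (MarkedIndex j) := sigmaCongrRight fun i => finRotate (j i)

abbrev MarkedCode (α : Type*) (j : Fin k → ℕ) :=
  (w : MarkedIndex j ↪ α) × Perm {y // y ∉ Set.range w}

variable {j}

noncomputable def MarkedCode.decode (q : MarkedCode α j) : Perm α :=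
  subtypeCongr ((ofInjective q.1 q.1.injective).permCongr (rotation j)) q.2

theorem MarkedCode.decode_apply_of_mem (q : MarkedCode α j) (u : MarkedIndex j) :
    q.decode (q.1 u) = q.1 (rotation j u) := by
  rw [decode, Perm.subtypeCongr.left_apply _ _ (Set.mem_range_self u), permCongr_apply,
    ofInjective_symm_apply, ofInjective_apply]

theorem MarkedCode.decode_apply_of_notMem (q : MarkedCode α j) {y : α}
    (hy : y ∉ Set.range q.1) : q.decode y = q.2 ⟨y, hy⟩ := by
  rw [decode, Perm.subtypeCongr.right_apply _ _ hy]

variable [Fintype α]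

theorem MarkedCode.card_le : Fintype.card (MarkedCode α j) ≤ (Fintype.card α).factorial := by
  have hcompl (w : MarkedIndex j ↪ α) :
      Fintype.card {y // y ∉ Set.range w} = Fintype.card α - Fintype.card (MarkedIndex j) := by
    rw [Fintype.card_subtype_compl, Set.card_range_of_injective w.injective]
  rw [Fintype.card_sigma]
  simp only [Fintype.card_perm, hcompl, sum_const, card_univ, Fintype.card_embedding_eq,
    smul_eq_mul]
  exact Nat.descFactorial_mul_factorial_sub_le _ _

variable (α j) in
abbrev MarkedPerm := {p : Perm α × (Fin k → α) // p.2 ∈ p.1.pointTuples j}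

namespace MarkedPerm

theorem minimalPeriod_eq (p : MarkedPerm α j) (i : Fin k) :
    minimalPeriod p.1.1 (p.1.2 i) = j i :=
  (mem_filter.1 p.2).2.1 i

theorem not_sameCycle (p : MarkedPerm α j) {i i' : Fin k} (h : i ≠ i') :
    ¬p.1.1.SameCycle (p.1.2 i) (p.1.2 i') :=
  (mem_filter.1 p.2).2.2 i i' h

def markedCycles (p : MarkedPerm α j) : MarkedIndex j ↪ α where
  toFun u := (p.1.1 ^ (u.2 : ℕ)) (p.1.2 u.1)
  inj' := by
    rintro ⟨a, s⟩ ⟨b, t⟩ h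
    dsimp only at h
    have hab : a = b := by_contra fun hne => p.not_sameCycle hne <| by
      rw [← sameCycle_pow_right (n := t), ← h, sameCycle_pow_right]
    subst hab
    have hs : (s : ℕ) ∈ Set.Iio (minimalPeriod p.1.1 (p.1.2 a)) := by
      simp [p.minimalPeriod_eq]
    have ht : (t : ℕ) ∈ Set.Iio (minimalPeriod p.1.1 (p.1.2 a)) := by
      simp [p.minimalPeriod_eq]
    rw [Fin.ext (iterate_injOn_Iio_minimalPeriod hs ht (by simpa only [iterate_eq_pow] using h))]

theorem markedCycles_apply (p : MarkedPerm α j) (u : MarkedIndex j) :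
    markedCycles p u = (p.1.1 ^ (u.2 : ℕ)) (p.1.2 u.1) :=
  rfl

theorem markedCycles_rotation (p : MarkedPerm α j) (u : MarkedIndex j) :
    markedCycles p (rotation j u) = p.1.1 (markedCycles p u) :=
  pow_finRotate_apply (p.minimalPeriod_eq u.1) u.2

theorem mem_range_markedCycles_iff {p : MarkedPerm α j} {y : α} :
    y ∈ Set.range (markedCycles p) ↔ ∃ i, p.1.1.SameCycle (p.1.2 i) y := by
  refine ⟨fun ⟨u, hu⟩ => ⟨u.1, hu ▸ (SameCycle.refl _ _).pow_right⟩, fun ⟨i, hi⟩ => ?_⟩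
  obtain ⟨t, ht, rfl⟩ := sameCycle_iff_exists_pow_lt_minimalPeriod.1 hi
  exact ⟨⟨i, t, p.minimalPeriod_eq i ▸ ht⟩, rfl⟩

def unmarkedPerm (p : MarkedPerm α j) : Perm {y // y ∉ Set.range (markedCycles p)} :=
  p.1.1.subtypePerm fun y => by simp only [mem_range_markedCycles_iff, sameCycle_apply_right]

-- `σ` acts on the marked cycles as `rotation j` acts on the indices, so `decode` rebuilds it.
def encode (p : MarkedPerm α j) : MarkedCode α j :=
  ⟨p.markedCycles, p.unmarkedPerm⟩

theorem decode_encode (p : MarkedPerm α j) : p.encode.decode = p.1.1 := by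
  ext y
  by_cases hy : y ∈ Set.range p.markedCycles
  · obtain ⟨u, rfl⟩ := hy
    exact (p.encode.decode_apply_of_mem u).trans (p.markedCycles_rotation u)
  · exact p.encode.decode_apply_of_notMem hy

theorem encode_injective : Injective (encode (α := α) (j := j)) := by
  intro p q hpq
  have hσ : p.1.1 = q.1.1 := by rw [← p.decode_encode, hpq, q.decode_encode]
  have hw : p.markedCycles = q.markedCycles := congrArg Sigma.fst hpq
  have hx : p.1.2 = q.1.2 := funext fun i => by
    have hj : 0 < j i := p.minimalPeriod_eq i ▸ minimalPeriod_pos _ _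
    simpa [markedCycles_apply] using DFunLike.congr_fun hw ⟨i, 0, hj⟩
  exact Subtype.ext (Prod.ext hσ hx)

end MarkedPerm

theorem sum_card_pointTuples_le :
    ∑ σ : Perm α, #(σ.pointTuples j) ≤ (Fintype.card α).factorial := by
  calc ∑ σ : Perm α, #(σ.pointTuples j)
      = Fintype.card ((σ : Perm α) × {x // x ∈ σ.pointTuples j}) := by
        simp only [Fintype.card_sigma, Fintype.card_coe]
    _ = Fintype.card (MarkedPerm α j) := Fintype.card_congr
        (subtypeProdEquivSigmaSubtype fun (σ : Perm α) x => x ∈ σ.pointTuples j).symm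
    _ ≤ Fintype.card (MarkedCode α j) :=
        Fintype.card_le_of_injective _ MarkedPerm.encode_injective
    _ ≤ (Fintype.card α).factorial := MarkedCode.card_le

theorem sum_card_cycleTuples_le (j : Fin k → ℕ) :
    ∑ σ : Perm α, (#(σ.cycleTuples j) : ℝ) ≤
      (Fintype.card α).factorial * ∏ i, (1 : ℝ) / j i := by
  by_cases hj : ∃ i, j i = 0
  · obtain ⟨i, hi⟩ := hj
    simp only [cycleTuples_eq_empty hi, card_empty, Nat.cast_zero, sum_const_zero]
    positivity
  push Not at hj
  have hprod : (0 : ℝ) < ∏ i, (j i : ℝ) :=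
    prod_pos fun i _ => Nat.cast_pos.2 (Nat.pos_of_ne_zero (hj i))
  have hnat : (∏ i, j i) * ∑ σ : Perm α, #(σ.cycleTuples j) ≤ (Fintype.card α).factorial := by
    simpa only [mul_sum, card_pointTuples] using sum_card_pointTuples_le (α := α) (j := j)
  rw [prod_div_distrib, prod_const_one, ← div_eq_mul_one_div, le_div_iff₀ hprod, mul_comm]
  exact_mod_cast hnat

end Marking

end Equiv.Perm

open Equiv Perm

section CycleCounts

variable {n : ℕ}

theorem cycleCount_eq_card (σ : Perm (Fin n)) (j : ℕ) :
    cycleCount σ j = #{s ∈ σ.cycleSets | #s = j} := by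
  rw [cycleCount, card_filter_minimalPeriod_eq]
  rcases Nat.eq_zero_or_pos j with rfl | hj
  · rw [Nat.div_zero, eq_comm, card_eq_zero, filter_eq_empty_iff]
    exact fun s hs => (card_pos_of_mem_cycleSets hs).ne'
  · exact Nat.mul_div_cancel_left _ hj

theorem cycleCountIn_eq_card (σ : Perm (Fin n)) (I : Finset ℕ) :
    cycleCountIn σ I = #{s ∈ σ.cycleSets | #s ∈ I} := by
  rw [card_eq_sum_card_fiberwise (s := {s ∈ σ.cycleSets | #s ∈ I}) (f := fun s => #s) (t := I)
    fun s hs => (mem_filter.1 hs).2]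
  refine sum_congr rfl fun j hj => ?_
  rw [cycleCount_eq_card, filter_filter]
  exact congrArg card (filter_congr fun s _ => ⟨fun h => ⟨h ▸ hj, h⟩, And.right⟩)

theorem descFactorial_cycleCountIn (σ : Perm (Fin n)) (I : Finset ℕ) (k : ℕ) :
    (cycleCountIn σ I).descFactorial k =
      ∑ j ∈ Fintype.piFinset fun _ : Fin k => I, #(σ.cycleTuples j) := by
  rw [cycleCountIn_eq_card, ← card_filter_injective_forall_mem,
    card_eq_sum_card_fiberwise (f := fun O i => #(O i)) fun O hO => ?maps]
  case maps =>
    simp only [coe_filter, mem_filter, mem_univ, true_and, Set.mem_ofPred_eq] at hO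
    exact Fintype.mem_piFinset.2 fun i => (hO.2 i).2
  refine sum_congr rfl fun j hj => congrArg card ?_
  ext O
  simp only [cycleTuples, mem_filter, mem_univ, true_and, funext_iff]
  rw [Fintype.mem_piFinset] at hj
  exact ⟨fun ⟨⟨hinj, hO⟩, hOj⟩ => ⟨hinj, fun i => ⟨(hO i).1, hOj i⟩⟩,
    fun ⟨hinj, hO⟩ => ⟨⟨hinj, fun i => ⟨(hO i).1, (hO i).2 ▸ hj i⟩⟩, fun i => (hO i).2⟩⟩

theorem sum_descFactorial_cycleCountIn_le (I : Finset ℕ) (k : ℕ) :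
    ∑ σ : Perm (Fin n), ((cycleCountIn σ I).descFactorial k : ℝ) ≤
      n.factorial * Hset I ^ k := by
  calc ∑ σ : Perm (Fin n), ((cycleCountIn σ I).descFactorial k : ℝ)
      = ∑ j ∈ Fintype.piFinset fun _ : Fin k => I,
          ∑ σ : Perm (Fin n), (#(σ.cycleTuples j) : ℝ) := by
        simp only [descFactorial_cycleCountIn, Nat.cast_sum]
        exact sum_comm
    _ ≤ ∑ j ∈ Fintype.piFinset fun _ : Fin k => I, (n.factorial * ∏ i, (1 : ℝ) / j i) :=
        sum_le_sum fun j _ => by simpa using sum_card_cycleTuples_le (α := Fin n) j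
    _ = n.factorial * Hset I ^ k := by
        rw [← mul_sum, ← prod_univ_sum (fun _ : Fin k => I) fun _ j => (1 : ℝ) / j, prod_const,
          card_univ, Fintype.card_fin, Hset]

theorem sum_pow_cycleCountIn_le (I : Finset ℕ) {lam : ℝ} (hlam : 1 ≤ lam) :
    ∑ σ : Perm (Fin n), lam ^ cycleCountIn σ I ≤
      n.factorial * Real.exp ((lam - 1) * Hset I) := by
  have hH : 0 ≤ Hset I := sum_nonneg fun j _ => by positivity
  simpa using sum_pow_le_mul_exp_of_sum_descFactorial_le univ (cycleCountIn · I) hH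
    (sub_nonneg.2 hlam) (sum_descFactorial_cycleCountIn_le I)

end CycleCounts

theorem upper_tail_bound_general (n : ℕ) (I : Finset ℕ) (lam : ℝ) (h1 : 1 ≤ lam) :
    permP n (fun σ => lam * Hset I + 1 ≤ (cycleCountIn σ I : ℝ))
      ≤ 2 * Real.exp (1 - (lam * Real.log lam - lam + 1) * Hset I) := by
  set a := lam * Hset I + 1
  set bound := Real.exp (1 - (lam * Real.log lam - lam + 1) * Hset I)
  have hlam : 0 < lam := one_pos.trans_le h1
  have hfact : (0 : ℝ) < n.factorial := by positivity
  have hexp : Real.exp ((lam - 1) * Hset I) ≤ lam ^ a * bound := by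
    rw [Real.rpow_def_of_pos hlam, ← Real.exp_add, Real.exp_le_exp]
    nlinarith [Real.log_nonneg h1]
  have hmarkov := (card_filter_mul_rpow_le_sum_pow (univ : Finset (Perm (Fin n)))
    (cycleCountIn · I) (a := a) h1).trans (sum_pow_cycleCountIn_le I h1)
  have hcard : (#{σ : Perm (Fin n) | a ≤ cycleCountIn σ I} : ℝ) ≤ n.factorial * bound := by
    refine le_of_mul_le_mul_right (hmarkov.trans ?_) (Real.rpow_pos_of_pos hlam a)
    exact (mul_le_mul_of_nonneg_left hexp hfact.le).trans_eq (by ring)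
  rw [permP, Nat.card_eq_fintype_card, Fintype.card_subtype, div_le_iff₀ hfact]
  nlinarith [show 0 < bound from Real.exp_pos _]

/-- **Upper tail bound.** For nonempty `I ⊆ [n]` and `λ ≥ 1`,
`P(C_I(σ) ≥ λ H(I) + 1) ≤ 2 e^{1 - Q(λ) H(I)}` where
`Q(λ) = λ log λ - λ + 1`. -/
theorem upper_tail_bound (n : ℕ) (I : Finset ℕ) (hne : I.Nonempty)
    (hsub : I ⊆ Finset.Icc 1 n) (lam : ℝ) (h1 : 1 ≤ lam) :
    permP n (fun σ => lam * Hset I + 1 ≤ (cycleCountIn σ I : ℝ))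
      ≤ 2 * Real.exp (1 - (lam * Real.log lam - lam + 1) * Hset I) :=
  upper_tail_bound_general n I lam h1
end
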